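/- Let X be an n×p real matrix of full column rank with projection P_x = X(XᵀX)⁻¹Xᵀ, let Z be n×q, let D, D̂ be q×q and R, R̂ be n×n matrices such that Σ = R + ZDZᵀ and Σ̂ = R̂ + ZD̂Zᵀ are invertible. Fix β ∈ ℝ^p, v ∈ ℝ^q, e ∈ ℝⁿ and c ∈ ℝⁿ, and set Y = Xβ + Zv + e, β̂ = (XᵀX)⁻¹XᵀY, μ_T = cᵀRΣ⁻¹Xβ + cᵀZDZᵀΣ⁻¹Y and μ̂_T = cᵀR̂Σ̂⁻¹Xβ̂ + cᵀZD̂ZᵀΣ̂⁻¹Y. Then μ̂_T − μ_T = cᵀ[I − ZDZᵀΣ⁻¹]P_x(Zv + e) + cᵀ(ZD̂ZᵀΣ̂⁻¹ − ZDZᵀΣ⁻¹)(I − P_x)(Zv + e). -/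

import Mathlib

open Matrix

lemma isUnit_of_rank_eq_card {p : ℕ} (B : Matrix (Fin p) (Fin p) ℝ) (h : B.rank = p) :
    IsUnit B := by
  rw [← Matrix.mulVec_injective_iff_isUnit]
  have hs : Function.Surjective B.mulVecLin := by
    rw [← LinearMap.range_eq_top]
    apply Submodule.eq_top_of_finrank_eq
    simpa [Matrix.rank] using h
  have := (LinearMap.injective_iff_surjective (f := B.mulVecLin)).mpr hs
  exact this

/-- The exact decomposition of `μ̂_T − μ_T` used in the proof of Theorem 3.1:
`μ̂_T − μ_T = cᵀ[I − ZDZᵀΣ⁻¹]P_x(Zv + e) + cᵀ(ZD̂ZᵀΣ̂⁻¹ − ZDZᵀΣ⁻¹)(I − P_x)(Zv + e)`. -/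
theorem muHat_sub_muT_decomposition {n p q : ℕ}
    (X : Matrix (Fin n) (Fin p) ℝ) (hX : X.rank = p)
    (Z : Matrix (Fin n) (Fin q) ℝ)
    (D Dhat : Matrix (Fin q) (Fin q) ℝ) (R Rhat : Matrix (Fin n) (Fin n) ℝ)
    (hSig : IsUnit (R + Z * D * Zᵀ)) (hSigHat : IsUnit (Rhat + Z * Dhat * Zᵀ))
    (β : Fin p → ℝ) (v : Fin q → ℝ) (e : Fin n → ℝ) (c : Fin n → ℝ)
    (Px : Matrix (Fin n) (Fin n) ℝ) (hPx : Px = X * (Xᵀ * X)⁻¹ * Xᵀ)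
    (Y : Fin n → ℝ) (hY : Y = X *ᵥ β + Z *ᵥ v + e)
    (βhat : Fin p → ℝ) (hβhat : βhat = ((Xᵀ * X)⁻¹ * Xᵀ) *ᵥ Y)
    (μT : ℝ)
    (hμT : μT = c ⬝ᵥ ((R * (R + Z * D * Zᵀ)⁻¹ * X) *ᵥ β) +
        c ⬝ᵥ ((Z * D * Zᵀ * (R + Z * D * Zᵀ)⁻¹) *ᵥ Y))
    (μhat : ℝ)
    (hμhat : μhat = c ⬝ᵥ ((Rhat * (Rhat + Z * Dhat * Zᵀ)⁻¹ * X) *ᵥ βhat) +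
        c ⬝ᵥ ((Z * Dhat * Zᵀ * (Rhat + Z * Dhat * Zᵀ)⁻¹) *ᵥ Y)) :
    μhat - μT =
      c ⬝ᵥ (((1 - Z * D * Zᵀ * (R + Z * D * Zᵀ)⁻¹) * Px) *ᵥ (Z *ᵥ v + e)) +
        c ⬝ᵥ (((Z * Dhat * Zᵀ * (Rhat + Z * Dhat * Zᵀ)⁻¹ - Z * D * Zᵀ * (R + Z * D * Zᵀ)⁻¹) *
          (1 - Px)) *ᵥ (Z *ᵥ v + e)) := by
  have hdet : IsUnit (R + Z * D * Zᵀ).det := (Matrix.isUnit_iff_isUnit_det _).mp hSig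
  have hdetHat : IsUnit (Rhat + Z * Dhat * Zᵀ).det := (Matrix.isUnit_iff_isUnit_det _).mp hSigHat
  have hRS : R * (R + Z * D * Zᵀ)⁻¹ = 1 - Z * D * Zᵀ * (R + Z * D * Zᵀ)⁻¹ := by
    have h1 : (R + Z * D * Zᵀ) * (R + Z * D * Zᵀ)⁻¹ = 1 := Matrix.mul_nonsing_inv _ hdet
    have h2 : R = (R + Z * D * Zᵀ) - Z * D * Zᵀ := by abel
    nth_rewrite 1 [h2]
    rw [Matrix.sub_mul, h1]
  have hRSh : Rhat * (Rhat + Z * Dhat * Zᵀ)⁻¹ = 1 - Z * Dhat * Zᵀ * (Rhat + Z * Dhat * Zᵀ)⁻¹ := by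
    have h1 : (Rhat + Z * Dhat * Zᵀ) * (Rhat + Z * Dhat * Zᵀ)⁻¹ = 1 :=
      Matrix.mul_nonsing_inv _ hdetHat
    have h2 : Rhat = (Rhat + Z * Dhat * Zᵀ) - Z * Dhat * Zᵀ := by abel
    nth_rewrite 1 [h2]
    rw [Matrix.sub_mul, h1]
  have hXtX : IsUnit (Xᵀ * X) := by
    apply isUnit_of_rank_eq_card
    rw [Matrix.rank_transpose_mul_self, hX]
  have hXinv : (Xᵀ * X)⁻¹ * (Xᵀ * X) = 1 :=
    Matrix.nonsing_inv_mul _ ((Matrix.isUnit_iff_isUnit_det _).mp hXtX)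
  have hPxX : Px * X = X := by
    rw [hPx]
    calc X * (Xᵀ * X)⁻¹ * Xᵀ * X = X * ((Xᵀ * X)⁻¹ * (Xᵀ * X)) := by
          simp only [Matrix.mul_assoc]
      _ = X := by rw [hXinv, Matrix.mul_one]
  have hPxb : Px *ᵥ (X *ᵥ β) = X *ᵥ β := by
    rw [Matrix.mulVec_mulVec, hPxX]
  have hXbhat : X *ᵥ βhat = Px *ᵥ Y := by
    rw [hβhat, Matrix.mulVec_mulVec, hPx, Matrix.mul_assoc]
  subst hμT hμhat
  rw [hRS, hRSh]
  have key : ((1 - Z * Dhat * Zᵀ * (Rhat + Z * Dhat * Zᵀ)⁻¹) * X) *ᵥ βhat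
      = ((1 - Z * Dhat * Zᵀ * (Rhat + Z * Dhat * Zᵀ)⁻¹) * Px) *ᵥ Y := by
    rw [← Matrix.mulVec_mulVec, ← Matrix.mulVec_mulVec, hXbhat]
  rw [key, hY]
  rw [← dotProduct_add, ← dotProduct_add, ← dotProduct_sub, ← dotProduct_add]
  congr 1
  simp only [Matrix.sub_mul, Matrix.mul_sub, Matrix.mul_one, Matrix.one_mul,
    Matrix.sub_mulVec, Matrix.mulVec_add, Matrix.one_mulVec, ← Matrix.mulVec_mulVec, hPxb]
  module
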